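/- Let f : ℝ^d → ℝ be convex, L-smooth (differentiable with L-Lipschitz gradient, L > 0), and G-Lipschitz (‖∇f(w)‖ ≤ G for all w). Suppose there exists λ with 0 < λ ≤ L such that ‖∇f(w − η∇f(w)) − ∇f(w)‖ ≥ η λ ‖∇f(w)‖ for all w ∈ ℝ^d, where η = ρ/(2L) for some 0 < ρ < 1. Let w_0 ∈ ℝ^d, define gradient-descent iterates w_{τ+1} = w_τ − η ∇f(w_τ), and set ρ̂ := (3λ²/(8L²))·ρ (note 0 < ρ̂ < 1). Then for every positive integer E, ‖Σ_{τ=0}^{E−1} ∇f(w_τ)‖ ≤ ((1 − (1 − ρ̂)^E)/ρ̂) · G. -/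

import Mathlib

/-!
For convex `L`-smooth `f` the gradient is cocoercive,
`‖∇f x - ∇f y‖² ≤ L ⟪∇f x - ∇f y, x - y⟫` (Baillon–Haddad). Applied to one gradient step
`y = x - η ∇f x` this gives `ηL ‖∇f y‖² ≤ ηL ‖∇f x‖² - (2 - ηL) ‖∇f y - ∇f x‖²`, and the
assumed lower bound `‖∇f y - ∇f x‖ ≥ ηλ ‖∇f x‖` with `ηL = ρ/2` turns this into the contraction
`‖∇f y‖ ≤ (1 - ρ̂) ‖∇f x‖`. Hence `‖∇f (w τ)‖ ≤ (1 - ρ̂)^τ G`, and the triangle inequality bounds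
the sum by a geometric series.
-/

open scoped RealInnerProductSpace Gradient

theorem norm_sum_range_le_geom_sum_mul {F : Type*} [SeminormedAddCommGroup F] {v : ℕ → F}
    {q : ℝ} (hq : 0 ≤ q) (hv : ∀ n, ‖v (n + 1)‖ ≤ q * ‖v n‖) (n : ℕ) :
    ‖∑ i ∈ Finset.range n, v i‖ ≤ (∑ i ∈ Finset.range n, q ^ i) * ‖v 0‖ := by
  rw [Finset.sum_mul]
  exact (norm_sum_le _ _).trans
    (Finset.sum_le_sum fun i _ => le_geom (u := fun n => ‖v n‖) hq i fun k _ => hv k)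

section Smooth

variable {E : Type*} [NormedAddCommGroup E] [InnerProductSpace ℝ E] [CompleteSpace E]
  {f : E → ℝ} {L : ℝ}

theorem hasDerivAt_comp_add_smul {x v : E} {t : ℝ} (hf : DifferentiableAt ℝ f (x + t • v)) :
    HasDerivAt (fun s : ℝ => f (x + s • v)) ⟪∇ f (x + t • v), v⟫ t := by
  have hline : HasDerivAt (fun s : ℝ => x + s • v) v t := by
    simpa using ((hasDerivAt_id t).smul_const v).const_add x
  exact hf.hasGradientAt.hasFDerivAt.comp_hasDerivAt t hline

theorem ConvexOn.add_inner_gradient_le (hconv : ConvexOn ℝ Set.univ f)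
    (hf : Differentiable ℝ f) (x z : E) : f x + ⟪∇ f x, z - x⟫ ≤ f z := by
  have hline : ConvexOn ℝ Set.univ (fun t : ℝ => f (x + t • (z - x))) := by
    simpa [Function.comp_def, AffineMap.lineMap_apply, add_comm] using
      hconv.comp_affineMap (AffineMap.lineMap x z)
  have := hline.le_slope_of_hasDerivAt (Set.mem_univ 0) (Set.mem_univ 1) one_pos
    (by simpa only [zero_smul, add_zero] using hasDerivAt_comp_add_smul (hf _))
  simp only [slope_def_field, zero_smul, add_zero, one_smul, add_sub_cancel, sub_zero,
    div_one] at this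
  linarith

theorem apply_le_add_inner_gradient_add_sq (hf : Differentiable ℝ f)
    (hlip : ∀ x y, ‖∇ f x - ∇ f y‖ ≤ L * ‖x - y‖) (x y : E) :
    f y ≤ f x + ⟪∇ f x, y - x⟫ + L / 2 * ‖y - x‖ ^ 2 := by
  set v := y - x
  set ψ : ℝ → ℝ := fun t => f (x + t • v) - t * ⟪∇ f x, v⟫ - L / 2 * t ^ 2 * ‖v‖ ^ 2
  have hψ : ∀ t, HasDerivAt ψ (⟪∇ f (x + t • v) - ∇ f x, v⟫ - L * t * ‖v‖ ^ 2) t := by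
    intro t
    refine (((hasDerivAt_comp_add_smul (hf _)).sub
      ((hasDerivAt_id' t).mul_const ⟪∇ f x, v⟫)).sub
      (((hasDerivAt_pow 2 t).const_mul (L / 2)).mul_const (‖v‖ ^ 2))).congr_deriv ?_
    rw [inner_sub_left]
    ring
  have hψ' : ∀ t ∈ interior (Set.Icc (0 : ℝ) 1),
      ⟪∇ f (x + t • v) - ∇ f x, v⟫ - L * t * ‖v‖ ^ 2 ≤ 0 := by
    rw [interior_Icc]
    intro t ht
    rw [sub_nonpos]
    calc ⟪∇ f (x + t • v) - ∇ f x, v⟫ ≤ ‖∇ f (x + t • v) - ∇ f x‖ * ‖v‖ :=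
          real_inner_le_norm _ _
      _ ≤ L * ‖t • v‖ * ‖v‖ := by
          gcongr
          simpa using hlip (x + t • v) x
      _ = L * t * ‖v‖ ^ 2 := by rw [norm_smul, Real.norm_of_nonneg ht.1.le]; ring
  have := antitoneOn_of_hasDerivWithinAt_nonpos (convex_Icc 0 1)
    (fun t _ => (hψ t).continuousAt.continuousWithinAt)
    (fun t _ => (hψ t).hasDerivWithinAt) hψ' (by simp) (by simp) zero_le_one
  simp only [ψ, v, zero_smul, add_zero, zero_mul, sub_zero, one_smul, add_sub_cancel, one_mul,
    one_pow, mul_zero, ne_eq, OfNat.ofNat_ne_zero, not_false_eq_true, zero_pow] at this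
  linarith

theorem ConvexOn.add_inner_gradient_add_sq_le (hconv : ConvexOn ℝ Set.univ f)
    (hf : Differentiable ℝ f) (hL : 0 < L) (hlip : ∀ x y, ‖∇ f x - ∇ f y‖ ≤ L * ‖x - y‖)
    (x y : E) : f x + ⟪∇ f x, y - x⟫ + ‖∇ f y - ∇ f x‖ ^ 2 / (2 * L) ≤ f y := by
  set g := ∇ f y - ∇ f x
  -- convexity bounds `f z` from below at `x`, smoothness from above at `y`
  set z := y - L⁻¹ • g
  have h1 := hconv.add_inner_gradient_le hf x z
  have h2 := apply_le_add_inner_gradient_add_sq hf hlip y z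
  rw [show z - x = (y - x) - L⁻¹ • g by simp only [z]; abel, inner_sub_right,
    real_inner_smul_right] at h1
  rw [show z - y = -(L⁻¹ • g) by simp only [z]; abel, inner_neg_right, real_inner_smul_right,
    norm_neg, norm_smul, Real.norm_of_nonneg (inv_nonneg.mpr hL.le)] at h2
  have hg : L⁻¹ * ⟪∇ f y, g⟫ - L⁻¹ * ⟪∇ f x, g⟫ = L⁻¹ * ‖g‖ ^ 2 := by
    rw [← mul_sub, ← inner_sub_left, real_inner_self_eq_norm_sq]
  have hc : ‖g‖ ^ 2 / (2 * L) = L⁻¹ * ‖g‖ ^ 2 - L / 2 * (L⁻¹ * ‖g‖) ^ 2 := by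
    field_simp
    ring
  linarith

theorem ConvexOn.norm_sq_gradient_sub_le_inner (hconv : ConvexOn ℝ Set.univ f)
    (hf : Differentiable ℝ f) (hL : 0 < L) (hlip : ∀ x y, ‖∇ f x - ∇ f y‖ ≤ L * ‖x - y‖)
    (x y : E) : ‖∇ f x - ∇ f y‖ ^ 2 ≤ L * ⟪∇ f x - ∇ f y, x - y⟫ := by
  have hxy := hconv.add_inner_gradient_add_sq_le hf hL hlip x y
  have hyx := hconv.add_inner_gradient_add_sq_le hf hL hlip y x
  rw [norm_sub_rev] at hxy
  have hsum : ‖∇ f x - ∇ f y‖ ^ 2 / L ≤ ⟪∇ f x - ∇ f y, x - y⟫ := by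
    have hinner : ⟪∇ f x - ∇ f y, x - y⟫ = -⟪∇ f x, y - x⟫ - ⟪∇ f y, x - y⟫ := by
      rw [inner_sub_left, ← inner_neg_right, neg_sub]
    have hhalves : ‖∇ f x - ∇ f y‖ ^ 2 / L
        = ‖∇ f x - ∇ f y‖ ^ 2 / (2 * L) + ‖∇ f x - ∇ f y‖ ^ 2 / (2 * L) := by
      field_simp
      ring
    rw [hinner]
    linarith
  rwa [div_le_iff₀' hL] at hsum

theorem ConvexOn.norm_sq_gradient_sub_smul_gradient_le (hconv : ConvexOn ℝ Set.univ f)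
    (hf : Differentiable ℝ f) (hL : 0 < L) (hlip : ∀ x y, ‖∇ f x - ∇ f y‖ ≤ L * ‖x - y‖)
    (η : ℝ) (x : E) :
    η * L * ‖∇ f (x - η • ∇ f x)‖ ^ 2 ≤
      η * L * ‖∇ f x‖ ^ 2 - (2 - η * L) * ‖∇ f (x - η • ∇ f x) - ∇ f x‖ ^ 2 := by
  have hcoco := hconv.norm_sq_gradient_sub_le_inner hf hL hlip x (x - η • ∇ f x)
  rw [sub_sub_cancel, real_inner_smul_right] at hcoco
  set a := ∇ f x
  set b := ∇ f (x - η • a)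
  have hexpand : ‖b‖ ^ 2 = ‖a‖ ^ 2 - 2 * ⟪a, a - b⟫ + ‖a - b‖ ^ 2 := by
    rw [← norm_sub_sq_real, sub_sub_cancel]
  rw [hexpand, real_inner_comm, norm_sub_rev b a]
  linear_combination 2 * hcoco

theorem ConvexOn.norm_gradient_sub_smul_gradient_le (hconv : ConvexOn ℝ Set.univ f)
    (hf : Differentiable ℝ f) (hL : 0 < L) (hlip : ∀ x y, ‖∇ f x - ∇ f y‖ ≤ L * ‖x - y‖)
    {lam ρ η ρhat : ℝ} (hlam : 0 ≤ lam) (hρ0 : 0 < ρ) (hρ1 : ρ ≤ 1) (hη : η = ρ / (2 * L))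
    (hρhat : ρhat = (3 * lam ^ 2 / (8 * L ^ 2)) * ρ) (hρhat1 : ρhat ≤ 1) {x : E}
    (hlow : η * lam * ‖∇ f x‖ ≤ ‖∇ f (x - η • ∇ f x) - ∇ f x‖) :
    ‖∇ f (x - η • ∇ f x)‖ ≤ (1 - ρhat) * ‖∇ f x‖ := by
  have hstep := hconv.norm_sq_gradient_sub_smul_gradient_le hf hL hlip η x
  set N := ‖∇ f x‖
  set M := ‖∇ f (x - η • ∇ f x)‖
  set K := ‖∇ f (x - η • ∇ f x) - ∇ f x‖
  have hηL : η * L = ρ / 2 := by rw [hη]; field_simp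
  have hK : (η * lam * N) ^ 2 ≤ K ^ 2 := by
    gcongr
    rw [hη]; positivity
  have hM : M ^ 2 ≤ (1 - 2 * ρhat) * N ^ 2 := by
    rw [hηL] at hstep
    have : (η * lam * N) ^ 2 = ρ / 2 * (ρhat * N ^ 2) * (4 / 3) := by
      rw [hη, hρhat]; field_simp; ring
    nlinarith
  have hM' : M ^ 2 ≤ ((1 - ρhat) * N) ^ 2 := by nlinarith [sq_nonneg (ρhat * N)]
  exact (pow_le_pow_iff_left₀ (norm_nonneg _)
    (mul_nonneg (sub_nonneg.mpr hρhat1) (norm_nonneg _)) two_ne_zero).mp hM'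

end Smooth

/-- Equation (mar12-1005): geometric-sum bound on the update norm under the
gradient lower-bound assumption, with `ρ̂ = (3λ²/(8L²))ρ`. -/
theorem stmt_8 {d : ℕ} (f : EuclideanSpace ℝ (Fin d) → ℝ) (L G lam ρ η ρhat : ℝ)
    (hL : 0 < L)
    (hconv : ConvexOn ℝ Set.univ f)
    (hdiff : Differentiable ℝ f)
    (hlip : ∀ x y, ‖gradient f x - gradient f y‖ ≤ L * ‖x - y‖)
    (hG : ∀ x, ‖gradient f x‖ ≤ G)
    (hlam0 : 0 < lam) (hlamL : lam ≤ L)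
    (hlow : ∀ x, ‖gradient f (x - η • gradient f x) - gradient f x‖ ≥
      η * lam * ‖gradient f x‖)
    (hρ0 : 0 < ρ) (hρ1 : ρ < 1) (hη : η = ρ / (2 * L))
    (hρhat : ρhat = (3 * lam ^ 2 / (8 * L ^ 2)) * ρ)
    (w : ℕ → EuclideanSpace ℝ (Fin d))
    (hw : ∀ τ, w (τ + 1) = w τ - η • gradient f (w τ)) :
    ∀ E : ℕ, 0 < E →
      ‖∑ τ ∈ Finset.range E, gradient f (w τ)‖ ≤
        ((1 - (1 - ρhat) ^ E) / ρhat) * G := by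
  intro E _
  have hρhat0 : 0 < ρhat := by rw [hρhat]; positivity
  have hρhat1 : ρhat ≤ 1 := by
    have : lam ^ 2 / L ^ 2 ≤ 1 := (div_le_one (by positivity)).mpr (by gcongr)
    rw [hρhat, show 3 * lam ^ 2 / (8 * L ^ 2) * ρ = 3 / 8 * (lam ^ 2 / L ^ 2) * ρ by ring]
    nlinarith
  have hcontract : ∀ τ, ‖∇ f (w (τ + 1))‖ ≤ (1 - ρhat) * ‖∇ f (w τ)‖ := fun τ => by
    rw [hw τ]
    exact hconv.norm_gradient_sub_smul_gradient_le hdiff hL hlip hlam0.le hρ0 hρ1.le hη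
      hρhat hρhat1 (hlow (w τ))
  have hgeom : ∑ τ ∈ Finset.range E, (1 - ρhat) ^ τ = (1 - (1 - ρhat) ^ E) / ρhat := by
    rw [geom_sum_eq (by linarith), ← neg_div_neg_eq, neg_sub, neg_sub, sub_sub_cancel]
  calc ‖∑ τ ∈ Finset.range E, ∇ f (w τ)‖
      ≤ (∑ τ ∈ Finset.range E, (1 - ρhat) ^ τ) * ‖∇ f (w 0)‖ :=
        norm_sum_range_le_geom_sum_mul (sub_nonneg.mpr hρhat1) hcontract E
    _ ≤ ((1 - (1 - ρhat) ^ E) / ρhat) * G := by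
        rw [hgeom]
        gcongr
        · exact div_nonneg (sub_nonneg.mpr (pow_le_one₀ (by linarith) (by linarith))) hρhat0.le
        · exact hG _
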